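/- arXiv:1804.02635 — 2 statements merged into one kernel-verified Lean document; each statement's English description precedes it below -/
import Mathlib

section
/- Let a ≥ 1 and let u ∈ ℝ² be a unit vector. For ε ∈ (0,1) define w : ℝ² \ {0} → ℝ by w(x) = |x|^{1−ε} + a ⟨x, u⟩ |x|^{−ε}. Then: (i) there exists ε₀ ∈ (0,1), depending only on a, such that for every ε ∈ (0, ε₀) one has Δw(x) ≥ 0 for all x ≠ 0 (w is subharmonic away from the origin); (ii) writing φ(x) ∈ [0, π] for the angle between x and u, one has w(x) > 0 exactly when cos φ(x) > −1/a, and w(x) = 0 exactly when cos φ(x) = −1/a; (iii) the angle α = arccos(−1/a) lies in (π/2, π], w extends continuously to 0 with w(0) = 0, and every value α ∈ (π/2, π] is attained by choosing a = −1/cos α ≥ 1. -/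
noncomputable section

open Real Set Filter Topology MeasureTheory Asymptotics

/-- Partial derivative in the `x`-direction. -/
def pdx (ψ : ℝ × ℝ → ℝ) (x : ℝ × ℝ) : ℝ := fderiv ℝ ψ x (1, 0)

/-- Partial derivative in the `y`-direction. -/
def pdy (ψ : ℝ × ℝ → ℝ) (x : ℝ × ℝ) : ℝ := fderiv ℝ ψ x (0, 1)

/-- The gradient `∇ψ` of a function on the plane. -/
def grad (ψ : ℝ × ℝ → ℝ) (x : ℝ × ℝ) : ℝ × ℝ := (pdx ψ x, pdy ψ x)

/-- The Laplacian `Δψ = ∂ₓ²ψ + ∂ᵧ²ψ`. -/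
def planeLap (ψ : ℝ × ℝ → ℝ) (x : ℝ × ℝ) : ℝ := pdx (pdx ψ) x + pdy (pdy ψ) x

/-- `ψ` is harmonic on `Ω`: twice differentiable with vanishing Laplacian. -/
def HarmOn (ψ : ℝ × ℝ → ℝ) (Ω : Set (ℝ × ℝ)) : Prop :=
  ContDiffOn ℝ 2 ψ Ω ∧ ∀ x ∈ Ω, planeLap ψ x = 0

/-- The Euclidean norm on `ℝ × ℝ`. -/
def enorm2 (x : ℝ × ℝ) : ℝ := Real.sqrt (x.1 ^ 2 + x.2 ^ 2)

/-- The open circular sector centered at `p` with radii at angles `θ₀, θ₁` and radius `R`. -/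
def sector (p : ℝ × ℝ) (θ₀ θ₁ R : ℝ) : Set (ℝ × ℝ) :=
  {x | ∃ r θ : ℝ, 0 < r ∧ r < R ∧ θ₀ < θ ∧ θ < θ₁ ∧
    x = (p.1 + r * Real.cos θ, p.2 + r * Real.sin θ)}

/-- `S` is a pacman centered at `p`: an open circular sector of angle greater than `π`. -/
def IsPacman (p : ℝ × ℝ) (S : Set (ℝ × ℝ)) : Prop :=
  ∃ θ₀ θ₁ R : ℝ, 0 < R ∧ Real.pi < θ₁ - θ₀ ∧ S = sector p θ₀ θ₁ R

/-! ### Auxiliary machinery for derivatives on the plane -/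

/-- The continuous linear map `(v₁, v₂) ↦ A v₁ + B v₂`. -/
def LM (A B : ℝ) : ℝ × ℝ →L[ℝ] ℝ :=
  A • (ContinuousLinearMap.fst ℝ ℝ ℝ) + B • (ContinuousLinearMap.snd ℝ ℝ ℝ)

lemma LM_apply (A B : ℝ) (v : ℝ × ℝ) : LM A B v = A * v.1 + B * v.2 := by
  simp [LM, smul_eq_mul]

lemma LM_add (A B A' B' : ℝ) : LM A B + LM A' B' = LM (A + A') (B + B') := by
  refine ContinuousLinearMap.ext fun v => ?_
  simp [LM, smul_eq_mul]
  ring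

lemma hasQ (x : ℝ × ℝ) :
    HasFDerivAt (fun y : ℝ × ℝ => y.1 ^ 2 + y.2 ^ 2) (LM (2 * x.1) (2 * x.2)) x := by
  have h1 : HasFDerivAt (fun y : ℝ × ℝ => y.1 * y.1 + y.2 * y.2)
      (x.1 • (ContinuousLinearMap.fst ℝ ℝ ℝ) + x.1 • (ContinuousLinearMap.fst ℝ ℝ ℝ)
        + (x.2 • (ContinuousLinearMap.snd ℝ ℝ ℝ) + x.2 • (ContinuousLinearMap.snd ℝ ℝ ℝ))) x :=
    (hasFDerivAt_fst.mul hasFDerivAt_fst).add (hasFDerivAt_snd.mul hasFDerivAt_snd)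
  have h2 : (fun y : ℝ × ℝ => y.1 ^ 2 + y.2 ^ 2) = fun y : ℝ × ℝ => y.1 * y.1 + y.2 * y.2 := by
    funext y; ring
  rw [h2]
  convert h1 using 1
  refine ContinuousLinearMap.ext fun v => ?_
  simp [LM, smul_eq_mul]
  ring

/-- Product rule for `P(y) · (y₁² + y₂²)^p` away from the origin. -/
lemma keyD (p : ℝ) (x : ℝ × ℝ) (hx : x.1 ^ 2 + x.2 ^ 2 ≠ 0) (P : ℝ × ℝ → ℝ) (P1 P2 : ℝ)
    (hP : HasFDerivAt P (LM P1 P2) x) :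
    HasFDerivAt (fun y : ℝ × ℝ => P y * (y.1 ^ 2 + y.2 ^ 2) ^ p)
      (LM (P1 * (x.1 ^ 2 + x.2 ^ 2) ^ p + P x * (p * (x.1 ^ 2 + x.2 ^ 2) ^ (p - 1) * (2 * x.1)))
         (P2 * (x.1 ^ 2 + x.2 ^ 2) ^ p + P x * (p * (x.1 ^ 2 + x.2 ^ 2) ^ (p - 1) * (2 * x.2)))) x := by
  have hr : HasDerivAt (fun s : ℝ => s ^ p) (p * (x.1 ^ 2 + x.2 ^ 2) ^ (p - 1)) (x.1 ^ 2 + x.2 ^ 2) :=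
    Real.hasDerivAt_rpow_const (Or.inl hx)
  have hq : HasFDerivAt (fun y : ℝ × ℝ => (y.1 ^ 2 + y.2 ^ 2) ^ p)
      ((p * (x.1 ^ 2 + x.2 ^ 2) ^ (p - 1)) • LM (2 * x.1) (2 * x.2)) x :=
    by have h := hr.comp_hasFDerivAt x (hasQ x); exact h
  have h := hP.mul hq
  refine h.congr_fderiv ?_
  refine ContinuousLinearMap.ext fun v => ?_
  simp [LM, smul_eq_mul]
  ring

lemma pdx_of_hasF {f : ℝ × ℝ → ℝ} {A B : ℝ} {x : ℝ × ℝ} (h : HasFDerivAt f (LM A B) x) :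
    fderiv ℝ f x (1, 0) = A := by
  rw [h.fderiv, LM_apply]; simp

lemma pdy_of_hasF {f : ℝ × ℝ → ℝ} {A B : ℝ} {x : ℝ × ℝ} (h : HasFDerivAt f (LM A B) x) :
    fderiv ℝ f x (0, 1) = B := by
  rw [h.fderiv, LM_apply]; simp

lemma hasConstF (c : ℝ) (x : ℝ × ℝ) : HasFDerivAt (fun _ : ℝ × ℝ => c) (LM 0 0) x := by
  have h := hasFDerivAt_const (𝕜 := ℝ) (E := ℝ × ℝ) c x
  convert h using 1
  refine ContinuousLinearMap.ext fun v => ?_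
  simp [LM]

lemma hasAff (A B : ℝ) (x : ℝ × ℝ) :
    HasFDerivAt (fun y : ℝ × ℝ => A * y.1 + B * y.2) (LM A B) x := by
  exact (hasFDerivAt_fst.const_mul A).add (hasFDerivAt_snd.const_mul B)

lemma hasQuadx (c d e : ℝ) (x : ℝ × ℝ) :
    HasFDerivAt (fun y : ℝ × ℝ => c * y.1 * (d * y.1 + e * y.2))
      (LM (c * (d * x.1 + e * x.2) + c * x.1 * d) (c * x.1 * e)) x := by
  have h := (hasFDerivAt_fst.const_mul c).mul (hasAff d e x)
  refine h.congr_fderiv ?_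
  refine ContinuousLinearMap.ext fun v => ?_
  simp [LM, smul_eq_mul]
  ring

lemma hasQuady (c d e : ℝ) (x : ℝ × ℝ) :
    HasFDerivAt (fun y : ℝ × ℝ => c * y.2 * (d * y.1 + e * y.2))
      (LM (c * x.2 * d) (c * (d * x.1 + e * x.2) + c * x.2 * e)) x := by
  have h := (hasFDerivAt_snd.const_mul c).mul (hasAff d e x)
  refine h.congr_fderiv ?_
  refine ContinuousLinearMap.ext fun v => ?_
  simp [LM, smul_eq_mul]
  ring

/-! ### The gradient of `W` and its second derivatives -/

/-- `∂ₓ` of `W(y) = 1·|y|^{2s} + (a u₁ y₁ + a u₂ y₂)·|y|^{2t}`. -/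
def G1 (a s t : ℝ) (u y : ℝ × ℝ) : ℝ :=
  ((2 * s) * y.1 + 0 * y.2) * (y.1 ^ 2 + y.2 ^ 2) ^ (s - 1)
  + (a * u.1) * (y.1 ^ 2 + y.2 ^ 2) ^ t
  + (2 * t * a) * y.1 * (u.1 * y.1 + u.2 * y.2) * (y.1 ^ 2 + y.2 ^ 2) ^ (t - 1)

/-- `∂ᵧ` of `W`. -/
def G2 (a s t : ℝ) (u y : ℝ × ℝ) : ℝ :=
  (0 * y.1 + (2 * s) * y.2) * (y.1 ^ 2 + y.2 ^ 2) ^ (s - 1)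
  + (a * u.2) * (y.1 ^ 2 + y.2 ^ 2) ^ t
  + (2 * t * a) * y.2 * (u.1 * y.1 + u.2 * y.2) * (y.1 ^ 2 + y.2 ^ 2) ^ (t - 1)

/-- `∂ₓ∂ₓ W`. -/
def D1 (a s t : ℝ) (u x : ℝ × ℝ) : ℝ :=
  2 * s * (x.1 ^ 2 + x.2 ^ 2) ^ (s - 1)
  + 4 * s * (s - 1) * x.1 ^ 2 * (x.1 ^ 2 + x.2 ^ 2) ^ (s - 1 - 1)
  + 2 * t * a * u.1 * x.1 * (x.1 ^ 2 + x.2 ^ 2) ^ (t - 1)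
  + (2 * t * a * (u.1 * x.1 + u.2 * x.2) + 2 * t * a * u.1 * x.1) * (x.1 ^ 2 + x.2 ^ 2) ^ (t - 1)
  + 4 * t * (t - 1) * a * x.1 ^ 2 * (u.1 * x.1 + u.2 * x.2) * (x.1 ^ 2 + x.2 ^ 2) ^ (t - 1 - 1)

/-- `∂ᵧ∂ₓ W` (unused component). -/
def E1 (a s t : ℝ) (u x : ℝ × ℝ) : ℝ :=
  4 * s * (s - 1) * x.1 * x.2 * (x.1 ^ 2 + x.2 ^ 2) ^ (s - 1 - 1)
  + 2 * t * a * u.1 * x.2 * (x.1 ^ 2 + x.2 ^ 2) ^ (t - 1)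
  + 2 * t * a * u.2 * x.1 * (x.1 ^ 2 + x.2 ^ 2) ^ (t - 1)
  + 4 * t * (t - 1) * a * x.1 * x.2 * (u.1 * x.1 + u.2 * x.2) * (x.1 ^ 2 + x.2 ^ 2) ^ (t - 1 - 1)

/-- `∂ₓ∂ᵧ W` (unused component). -/
def D2 (a s t : ℝ) (u x : ℝ × ℝ) : ℝ :=
  4 * s * (s - 1) * x.1 * x.2 * (x.1 ^ 2 + x.2 ^ 2) ^ (s - 1 - 1)
  + 2 * t * a * u.2 * x.1 * (x.1 ^ 2 + x.2 ^ 2) ^ (t - 1)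
  + 2 * t * a * u.1 * x.2 * (x.1 ^ 2 + x.2 ^ 2) ^ (t - 1)
  + 4 * t * (t - 1) * a * x.1 * x.2 * (u.1 * x.1 + u.2 * x.2) * (x.1 ^ 2 + x.2 ^ 2) ^ (t - 1 - 1)

/-- `∂ᵧ∂ᵧ W`. -/
def E2 (a s t : ℝ) (u x : ℝ × ℝ) : ℝ :=
  2 * s * (x.1 ^ 2 + x.2 ^ 2) ^ (s - 1)
  + 4 * s * (s - 1) * x.2 ^ 2 * (x.1 ^ 2 + x.2 ^ 2) ^ (s - 1 - 1)
  + 2 * t * a * u.2 * x.2 * (x.1 ^ 2 + x.2 ^ 2) ^ (t - 1)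
  + (2 * t * a * (u.1 * x.1 + u.2 * x.2) + 2 * t * a * u.2 * x.2) * (x.1 ^ 2 + x.2 ^ 2) ^ (t - 1)
  + 4 * t * (t - 1) * a * x.2 ^ 2 * (u.1 * x.1 + u.2 * x.2) * (x.1 ^ 2 + x.2 ^ 2) ^ (t - 1 - 1)

lemma Wder (a s t : ℝ) (u : ℝ × ℝ) (y : ℝ × ℝ) (hy : y.1 ^ 2 + y.2 ^ 2 ≠ 0) :
    HasFDerivAt (fun z : ℝ × ℝ =>
        (1 : ℝ) * (z.1 ^ 2 + z.2 ^ 2) ^ s + ((a * u.1) * z.1 + (a * u.2) * z.2) * (z.1 ^ 2 + z.2 ^ 2) ^ t)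
      (LM (G1 a s t u y) (G2 a s t u y)) y := by
  have h := (keyD s y hy (fun _ => (1 : ℝ)) 0 0 (hasConstF 1 y)).add
    (keyD t y hy (fun z => (a * u.1) * z.1 + (a * u.2) * z.2) (a * u.1) (a * u.2)
      (hasAff (a * u.1) (a * u.2) y))
  rw [LM_add] at h
  refine h.congr_fderiv ?_
  refine ContinuousLinearMap.ext fun v => ?_
  simp only [LM_apply, G1, G2]
  ring

lemma G1der (a s t : ℝ) (u : ℝ × ℝ) (x : ℝ × ℝ) (hx : x.1 ^ 2 + x.2 ^ 2 ≠ 0) :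
    HasFDerivAt (fun y => G1 a s t u y) (LM (D1 a s t u x) (E1 a s t u x)) x := by
  have h := ((keyD (s - 1) x hx (fun y => (2 * s) * y.1 + 0 * y.2) (2 * s) 0
        (hasAff (2 * s) 0 x)).add
      (keyD t x hx (fun _ => a * u.1) 0 0 (hasConstF (a * u.1) x))).add
    (keyD (t - 1) x hx (fun y => (2 * t * a) * y.1 * (u.1 * y.1 + u.2 * y.2))
      ((2 * t * a) * (u.1 * x.1 + u.2 * x.2) + (2 * t * a) * x.1 * u.1) ((2 * t * a) * x.1 * u.2)
      (hasQuadx (2 * t * a) u.1 u.2 x))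
  rw [LM_add, LM_add] at h
  refine h.congr_fderiv ?_
  refine ContinuousLinearMap.ext fun v => ?_
  simp only [LM_apply, D1, E1]
  ring

lemma G2der (a s t : ℝ) (u : ℝ × ℝ) (x : ℝ × ℝ) (hx : x.1 ^ 2 + x.2 ^ 2 ≠ 0) :
    HasFDerivAt (fun y => G2 a s t u y) (LM (D2 a s t u x) (E2 a s t u x)) x := by
  have h := ((keyD (s - 1) x hx (fun y => 0 * y.1 + (2 * s) * y.2) 0 (2 * s)
        (hasAff 0 (2 * s) x)).add
      (keyD t x hx (fun _ => a * u.2) 0 0 (hasConstF (a * u.2) x))).add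
    (keyD (t - 1) x hx (fun y => (2 * t * a) * y.2 * (u.1 * y.1 + u.2 * y.2))
      ((2 * t * a) * x.2 * u.1) ((2 * t * a) * (u.1 * x.1 + u.2 * x.2) + (2 * t * a) * x.2 * u.2)
      (hasQuady (2 * t * a) u.1 u.2 x))
  rw [LM_add, LM_add] at h
  refine h.congr_fderiv ?_
  refine ContinuousLinearMap.ext fun v => ?_
  simp only [LM_apply, D2, E2]
  ring

/-- The key sign inequality for the Laplacian. -/
lemma finalIneq (a ε : ℝ) (u x : ℝ × ℝ) (hu : u.1 ^ 2 + u.2 ^ 2 = 1) (ha : 1 ≤ a)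
    (hε : 0 < ε) (hε2 : ε * (2 + 8 * a) < 1) (hx : x.1 ^ 2 + x.2 ^ 2 ≠ 0) :
    0 ≤ D1 a ((1 - ε) / 2) (-ε / 2) u x + E2 a ((1 - ε) / 2) (-ε / 2) u x := by
  have ha0 : (0 : ℝ) < a := lt_of_lt_of_le one_pos ha
  have hQ : 0 < x.1 ^ 2 + x.2 ^ 2 := lt_of_le_of_ne (by positivity) (Ne.symm hx)
  set s : ℝ := (1 - ε) / 2 with hs
  set t : ℝ := -ε / 2 with ht
  have e1 : (x.1 ^ 2 + x.2 ^ 2) ^ (s - 1) = (x.1 ^ 2 + x.2 ^ 2) ^ (s - 1 - 1) * (x.1 ^ 2 + x.2 ^ 2) := by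
    rw [← Real.rpow_add_one hQ.ne' (s - 1 - 1)]
    congr 1
    ring
  have e2 : (x.1 ^ 2 + x.2 ^ 2) ^ (t - 1) = (x.1 ^ 2 + x.2 ^ 2) ^ (t - 1 - 1) * (x.1 ^ 2 + x.2 ^ 2) := by
    rw [← Real.rpow_add_one hQ.ne' (t - 1 - 1)]
    congr 1
    ring
  have hA : (0 : ℝ) < (x.1 ^ 2 + x.2 ^ 2) ^ (s - 1 - 1) := Real.rpow_pos_of_pos hQ _
  have hB : (0 : ℝ) < (x.1 ^ 2 + x.2 ^ 2) ^ (t - 1 - 1) := Real.rpow_pos_of_pos hQ _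
  have hsq : Real.sqrt (x.1 ^ 2 + x.2 ^ 2) * (x.1 ^ 2 + x.2 ^ 2) ^ (t - 1 - 1)
      = (x.1 ^ 2 + x.2 ^ 2) ^ (s - 1 - 1) := by
    rw [Real.sqrt_eq_rpow, ← Real.rpow_add hQ]
    congr 1
    rw [hs, ht]; ring
  have hc2 : (x.1 * u.1 + x.2 * u.2) ^ 2 ≤ x.1 ^ 2 + x.2 ^ 2 := by
    nlinarith [sq_nonneg (x.1 * u.2 - x.2 * u.1)]
  have hc : x.1 * u.1 + x.2 * u.2 ≤ Real.sqrt (x.1 ^ 2 + x.2 ^ 2) := by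
    rcases le_or_gt (x.1 * u.1 + x.2 * u.2) 0 with h | h
    · exact h.trans (Real.sqrt_nonneg _)
    · exact (Real.le_sqrt h.le hQ.le).mpr hc2
  have hεlt : ε < 1 / 10 := by nlinarith [mul_pos hε ha0]
  have hk : 4 * t * (t + 1) * a ≤ 0 := by
    rw [ht]
    nlinarith [mul_nonneg (mul_nonneg hε.le (by linarith : (0:ℝ) ≤ 1 - ε / 2)) ha0.le]
  have m1 : (4 * t * (t + 1) * a) * Real.sqrt (x.1 ^ 2 + x.2 ^ 2)
      ≤ (4 * t * (t + 1) * a) * (x.1 * u.1 + x.2 * u.2) :=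
    mul_le_mul_of_nonpos_left hc hk
  have m2 : (4 * t * (t + 1) * a) * Real.sqrt (x.1 ^ 2 + x.2 ^ 2)
        * ((x.1 ^ 2 + x.2 ^ 2) ^ (t - 1 - 1) * (x.1 ^ 2 + x.2 ^ 2))
      ≤ (4 * t * (t + 1) * a) * (x.1 * u.1 + x.2 * u.2)
        * ((x.1 ^ 2 + x.2 ^ 2) ^ (t - 1 - 1) * (x.1 ^ 2 + x.2 ^ 2)) :=
    mul_le_mul_of_nonneg_right m1 (by positivity)
  have m3 : (4 * t * (t + 1) * a) * Real.sqrt (x.1 ^ 2 + x.2 ^ 2)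
        * ((x.1 ^ 2 + x.2 ^ 2) ^ (t - 1 - 1) * (x.1 ^ 2 + x.2 ^ 2))
      = (4 * t * (t + 1) * a) * ((x.1 ^ 2 + x.2 ^ 2) ^ (s - 1 - 1) * (x.1 ^ 2 + x.2 ^ 2)) := by
    rw [show (4 * t * (t + 1) * a) * Real.sqrt (x.1 ^ 2 + x.2 ^ 2)
        * ((x.1 ^ 2 + x.2 ^ 2) ^ (t - 1 - 1) * (x.1 ^ 2 + x.2 ^ 2))
      = (4 * t * (t + 1) * a) * ((Real.sqrt (x.1 ^ 2 + x.2 ^ 2)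
        * (x.1 ^ 2 + x.2 ^ 2) ^ (t - 1 - 1)) * (x.1 ^ 2 + x.2 ^ 2)) by ring, hsq]
  rw [m3] at m2
  have h6 : 0 ≤ 4 * s ^ 2 + 4 * t * (t + 1) * a := by
    rw [hs, ht]
    nlinarith [mul_pos hε ha0, mul_nonneg (mul_nonneg hε.le hε.le) ha0.le, sq_nonneg ε]
  have h7 : 0 ≤ (4 * s ^ 2 + 4 * t * (t + 1) * a)
      * ((x.1 ^ 2 + x.2 ^ 2) ^ (s - 1 - 1) * (x.1 ^ 2 + x.2 ^ 2)) :=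
    mul_nonneg h6 (by positivity)
  simp only [D1, E2]
  rw [e1, e2]
  linarith [m2, h7]

/-- Properties of the comparison subsolution `w(x) = |x|^(1-ε) + a ⟨x,u⟩ |x|^(-ε)`:
(i) for `ε` small (depending only on `a`) it is subharmonic away from the origin;
(ii) its sign is determined by the angle `φ(x)` between `x` and `u` via `cos φ(x)` vs `-1/a`;
(iii) the zero-angle `arccos(-1/a)` lies in `(π/2, π]`, `w` extends continuously by `0` at the
origin, and every angle `α ∈ (π/2, π]` is attained by choosing `a = -1/cos α ≥ 1`. -/
theorem stmt_5 (a : ℝ) (ha : 1 ≤ a) (u : ℝ × ℝ) (hu : u.1 ^ 2 + u.2 ^ 2 = 1)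
    (w : ℝ → (ℝ × ℝ) → ℝ)
    (hw : ∀ ε : ℝ, ∀ x : ℝ × ℝ,
      w ε x = enorm2 x ^ (1 - ε) + a * (x.1 * u.1 + x.2 * u.2) * enorm2 x ^ (-ε)) :
    (∃ ε₀ ∈ Ioo (0:ℝ) 1, ∀ ε ∈ Ioo (0:ℝ) ε₀, ∀ x : ℝ × ℝ, x ≠ 0 → 0 ≤ planeLap (w ε) x) ∧
    (∀ ε ∈ Ioo (0:ℝ) 1, ∀ x : ℝ × ℝ, x ≠ 0 →
      ((0 < w ε x ↔ -1 / a < (x.1 * u.1 + x.2 * u.2) / enorm2 x) ∧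
       (w ε x = 0 ↔ (x.1 * u.1 + x.2 * u.2) / enorm2 x = -1 / a))) ∧
    (Real.arccos (-1 / a) ∈ Ioc (π / 2) π ∧
     (∀ ε ∈ Ioo (0:ℝ) 1, Tendsto (w ε) (𝓝[≠] (0 : ℝ × ℝ)) (𝓝 0)) ∧
     (∀ α ∈ Ioc (π / 2) π, 1 ≤ -1 / Real.cos α ∧
       Real.arccos (-1 / (-1 / Real.cos α)) = α)) := by
  have ha0 : (0 : ℝ) < a := lt_of_lt_of_le one_pos ha
  have hQne : ∀ x : ℝ × ℝ, x ≠ 0 → (0 : ℝ) < x.1 ^ 2 + x.2 ^ 2 := by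
    intro x hx
    rcases eq_or_ne x.1 0 with h1 | h1
    · have h2 : x.2 ≠ 0 := fun h2 => hx (Prod.ext h1 h2)
      positivity
    · positivity
  -- the rpow form of w
  have hwW : ∀ ε : ℝ, w ε = fun z : ℝ × ℝ =>
      (1 : ℝ) * (z.1 ^ 2 + z.2 ^ 2) ^ ((1 - ε) / 2)
        + ((a * u.1) * z.1 + (a * u.2) * z.2) * (z.1 ^ 2 + z.2 ^ 2) ^ (-ε / 2) := by
    intro ε
    funext z
    have hzn : (0 : ℝ) ≤ z.1 ^ 2 + z.2 ^ 2 := by positivity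
    rw [hw, enorm2, Real.sqrt_eq_rpow,
      ← Real.rpow_mul hzn, ← Real.rpow_mul hzn,
      show (1 : ℝ) / 2 * (1 - ε) = (1 - ε) / 2 by ring,
      show (1 : ℝ) / 2 * (-ε) = -ε / 2 by ring]
    ring
  refine ⟨⟨1 / (2 + 8 * a), ⟨by positivity, by rw [div_lt_one (by linarith)]; linarith⟩, ?_⟩, ?_, ?_, ?_, ?_⟩
  · -- (i) subharmonicity
    intro ε hε x hx
    have hε2 : ε * (2 + 8 * a) < 1 := by
      rw [← lt_div_iff₀ (by linarith : (0:ℝ) < 2 + 8 * a)]; exact hε.2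
    have hxQ : x.1 ^ 2 + x.2 ^ 2 ≠ 0 := (hQne x hx).ne'
    set s : ℝ := (1 - ε) / 2
    set t : ℝ := -ε / 2
    rw [hwW ε]
    have hU : IsOpen {y : ℝ × ℝ | y.1 ^ 2 + y.2 ^ 2 ≠ 0} := by
      have : Continuous fun y : ℝ × ℝ => y.1 ^ 2 + y.2 ^ 2 := by fun_prop
      exact this.isOpen_preimage {0}ᶜ isOpen_compl_singleton
    have hmem : {y : ℝ × ℝ | y.1 ^ 2 + y.2 ^ 2 ≠ 0} ∈ 𝓝 x := hU.mem_nhds hxQ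
    have hev1 : pdx (fun z : ℝ × ℝ =>
        (1 : ℝ) * (z.1 ^ 2 + z.2 ^ 2) ^ s + ((a * u.1) * z.1 + (a * u.2) * z.2) * (z.1 ^ 2 + z.2 ^ 2) ^ t)
        =ᶠ[𝓝 x] fun y => G1 a s t u y := by
      filter_upwards [hmem] with y hy
      exact pdx_of_hasF (Wder a s t u y hy)
    have hev2 : pdy (fun z : ℝ × ℝ =>
        (1 : ℝ) * (z.1 ^ 2 + z.2 ^ 2) ^ s + ((a * u.1) * z.1 + (a * u.2) * z.2) * (z.1 ^ 2 + z.2 ^ 2) ^ t)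
        =ᶠ[𝓝 x] fun y => G2 a s t u y := by
      filter_upwards [hmem] with y hy
      exact pdy_of_hasF (Wder a s t u y hy)
    have k1 : pdx (pdx (fun z : ℝ × ℝ =>
        (1 : ℝ) * (z.1 ^ 2 + z.2 ^ 2) ^ s + ((a * u.1) * z.1 + (a * u.2) * z.2) * (z.1 ^ 2 + z.2 ^ 2) ^ t)) x
        = D1 a s t u x := by
      show fderiv ℝ _ x (1, 0) = _
      rw [hev1.fderiv_eq]
      exact pdx_of_hasF (G1der a s t u x hxQ)
    have k2 : pdy (pdy (fun z : ℝ × ℝ =>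
        (1 : ℝ) * (z.1 ^ 2 + z.2 ^ 2) ^ s + ((a * u.1) * z.1 + (a * u.2) * z.2) * (z.1 ^ 2 + z.2 ^ 2) ^ t)) x
        = E2 a s t u x := by
      show fderiv ℝ _ x (0, 1) = _
      rw [hev2.fderiv_eq]
      exact pdy_of_hasF (G2der a s t u x hxQ)
    rw [planeLap, k1, k2]
    exact finalIneq a ε u x hu ha hε.1 hε2 hxQ
  · -- (ii) sign analysis
    intro ε hε x hx
    have hQ : 0 < x.1 ^ 2 + x.2 ^ 2 := hQne x hx
    have hr : 0 < enorm2 x := Real.sqrt_pos.mpr hQ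
    have hp : 0 < enorm2 x ^ (-ε) := Real.rpow_pos_of_pos hr _
    have hwx : w ε x = enorm2 x ^ (-ε) * (enorm2 x + a * (x.1 * u.1 + x.2 * u.2)) := by
      rw [hw, show (1 : ℝ) - ε = -ε + 1 by ring, Real.rpow_add_one hr.ne']
      ring
    constructor
    · rw [hwx, div_lt_div_iff₀ ha0 hr]
      constructor
      · intro h
        have h2 : 0 < enorm2 x + a * (x.1 * u.1 + x.2 * u.2) := by
          by_contra h3
          push_neg at h3
          nlinarith
        nlinarith
      · intro h
        have h2 : 0 < enorm2 x + a * (x.1 * u.1 + x.2 * u.2) := by nlinarith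
        exact mul_pos hp h2
    · rw [hwx, div_eq_div_iff hr.ne' ha0.ne', mul_eq_zero]
      constructor
      · intro h
        rcases h with h | h
        · exact absurd h hp.ne'
        · nlinarith
      · intro h
        right
        nlinarith
  · -- (iii) arccos(-1/a) ∈ Ioc (π/2) π
    have hneg : -1 / a < 0 := div_neg_of_neg_of_pos (by norm_num) ha0
    constructor
    · rw [Real.arccos_eq_pi_div_two_sub_arcsin]
      have : Real.arcsin (-1 / a) < 0 := Real.arcsin_lt_zero.mpr hneg
      linarith
    · exact Real.arccos_le_pi _
  · -- (iii) continuity at the origin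
    intro ε hε
    have h1ε : (0 : ℝ) < 1 - ε := by linarith [hε.2]
    apply squeeze_zero_norm' (a := fun x : ℝ × ℝ => (1 + a) * enorm2 x ^ (1 - ε))
    · filter_upwards [self_mem_nhdsWithin] with x hx
      have hx0 : x ≠ 0 := hx
      have hQ : 0 < x.1 ^ 2 + x.2 ^ 2 := hQne x hx0
      have hr : 0 < enorm2 x := Real.sqrt_pos.mpr hQ
      have hp : 0 < enorm2 x ^ (-ε) := Real.rpow_pos_of_pos hr _
      have hp1 : 0 < enorm2 x ^ (1 - ε) := Real.rpow_pos_of_pos hr _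
      have hmul : enorm2 x ^ (1 - ε) = enorm2 x ^ (-ε) * enorm2 x := by
        rw [show (1 : ℝ) - ε = -ε + 1 by ring, Real.rpow_add_one hr.ne']
      have hc2 : (x.1 * u.1 + x.2 * u.2) ^ 2 ≤ enorm2 x ^ 2 := by
        rw [enorm2, Real.sq_sqrt hQ.le]
        nlinarith [sq_nonneg (x.1 * u.2 - x.2 * u.1)]
      have hcabs : -enorm2 x ≤ x.1 * u.1 + x.2 * u.2 ∧ x.1 * u.1 + x.2 * u.2 ≤ enorm2 x := by
        constructor <;> nlinarith
      rw [hw, Real.norm_eq_abs, abs_le]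
      constructor
      · have := mul_le_mul_of_nonneg_right
          (mul_le_mul_of_nonneg_left hcabs.1 ha0.le) hp.le
        nlinarith
      · have := mul_le_mul_of_nonneg_right
          (mul_le_mul_of_nonneg_left hcabs.2 ha0.le) hp.le
        nlinarith
    · have h1 : Tendsto (fun x : ℝ × ℝ => enorm2 x) (𝓝[≠] (0 : ℝ × ℝ)) (𝓝 0) := by
        have hc : Continuous fun x : ℝ × ℝ => enorm2 x := by
          simp only [enorm2]
          fun_prop
        have := hc.tendsto (0 : ℝ × ℝ)
        simp only [enorm2, Prod.fst_zero, Prod.snd_zero] at this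
        norm_num at this
        exact (this.mono_left nhdsWithin_le_nhds)
      have h2 : Tendsto (fun r : ℝ => r ^ (1 - ε)) (𝓝 0) (𝓝 0) := by
        have hc := Real.continuousAt_rpow_const 0 (1 - ε) (Or.inr h1ε.le)
        have h0 : (0 : ℝ) ^ (1 - ε) = 0 := Real.zero_rpow h1ε.ne'
        simpa [ContinuousAt, h0] using hc
      have := (h2.comp h1).const_mul (1 + a)
      simpa using this
  · -- (iii) every angle is attained
    intro α hα
    have hπ : (0 : ℝ) < π := Real.pi_pos
    have hα0 : 0 ≤ α := by linarith [hα.1]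
    have hcos : Real.cos α < 0 := by
      apply Real.cos_neg_of_pi_div_two_lt_of_lt hα.1
      linarith [hα.2]
    constructor
    · rw [le_div_iff_of_neg hcos]
      linarith [Real.neg_one_le_cos α]
    · rw [show -1 / (-1 / Real.cos α) = Real.cos α by field_simp]
      exact Real.arccos_cos hα0 hα.2
end
end

section
/- Let R₀ > 0 and let ψ be real-analytic on U = {(x, y) ∈ ℝ² : |x| > R₀ or |y| > R₀}. Suppose there exist constants c > 0, k ∈ ℝ, d ∈ ℝ such that ψ(x, y) − (c y − k·log√(x² + y²)) − d → 0 and ∇ψ(x, y) → (0, c) as |(x, y)| → ∞. Then there exist R ≥ R₀ and real-analytic functions ŷ₋ : (−∞, −R) → ℝ and ŷ₊ : (R, ∞) → ℝ such that {(x, y) ∈ ℝ² : (|x| > R or |y| > R) and ψ(x, y) = 0} = {(x, ŷ₋(x)) : x < −R} ∪ {(x, ŷ₊(x)) : x > R}. That is, near infinity the zero set of ψ consists of exactly two disjoint analytic graphs, one over (−∞, −R) and one over (R, ∞). -/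
noncomputable section

open Real Set Filter Topology MeasureTheory Asymptotics

/-- From convergence along the cocompact filter we get a quantitative bound far away. -/
lemma cocompact_bound {α : Type*} [PseudoMetricSpace α] {f : ℝ × ℝ → α} {L : α}
    (h : Tendsto f (cocompact (ℝ × ℝ)) (𝓝 L)) {ε : ℝ} (hε : 0 < ε) :
    ∃ M : ℝ, ∀ z : ℝ × ℝ, M ≤ ‖z‖ → dist (f z) L < ε := by
  have hmem : f ⁻¹' Metric.ball L ε ∈ cocompact (ℝ × ℝ) :=
    h (Metric.ball_mem_nhds L hε)
  rw [mem_cocompact] at hmem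
  obtain ⟨K, hK, hKc⟩ := hmem
  obtain ⟨M, hM⟩ := hK.isBounded.subset_closedBall 0
  refine ⟨M + 1, fun z hz => ?_⟩
  have hzK : z ∉ K := by
    intro hzK
    have := hM hzK
    rw [Metric.mem_closedBall, dist_zero_right] at this
    linarith
  have := hKc hzK
  simpa [Metric.mem_ball] using this

set_option maxHeartbeats 1000000 in
/-- Near infinity the zero set of a stream function with asymptotics
`ψ(x,y) = c y - k log √(x²+y²) + d + o(1)`, `c > 0`, with gradient tending to `(0, c)`,
consists of exactly two analytic graphs, one over `(-∞, -R)` and one over `(R, ∞)`. -/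
theorem stmt_13 (R₀ : ℝ) (hR₀ : 0 < R₀) (ψ : ℝ × ℝ → ℝ)
    (U : Set (ℝ × ℝ)) (hU : U = {x : ℝ × ℝ | R₀ < |x.1| ∨ R₀ < |x.2|})
    (hψ : AnalyticOnNhd ℝ ψ U)
    (c k d : ℝ) (hc : 0 < c)
    (hasymp : Tendsto
      (fun x : ℝ × ℝ => ψ x - (c * x.2 - k * Real.log (Real.sqrt (x.1 ^ 2 + x.2 ^ 2))) - d)
      (cocompact (ℝ × ℝ)) (𝓝 0))
    (hgrad : Tendsto (grad ψ) (cocompact (ℝ × ℝ)) (𝓝 (0, c))) :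
    ∃ R : ℝ, R₀ ≤ R ∧ ∃ ym yp : ℝ → ℝ,
      AnalyticOnNhd ℝ ym (Iio (-R)) ∧ AnalyticOnNhd ℝ yp (Ioi R) ∧
      {x : ℝ × ℝ | (R < |x.1| ∨ R < |x.2|) ∧ ψ x = 0} =
        ((fun t => (t, ym t)) '' Iio (-R)) ∪ ((fun t => (t, yp t)) '' Ioi R) := by
  classical
  obtain ⟨M₁, hM₁⟩ := cocompact_bound hgrad (half_pos hc)
  obtain ⟨M₂, hM₂⟩ := cocompact_bound hasymp one_pos
  set C₀ : ℝ := |k| * Real.log (Real.sqrt 2) + |d| + 1 with hC₀def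
  have hlog2 : 0 ≤ Real.log (Real.sqrt 2) := by
    apply Real.log_nonneg
    rw [show (1:ℝ) = Real.sqrt 1 from (Real.sqrt_one).symm]
    exact Real.sqrt_le_sqrt (by norm_num)
  have hC₀pos : 1 ≤ C₀ := by
    have h1 : 0 ≤ |k| * Real.log (Real.sqrt 2) := mul_nonneg (abs_nonneg _) hlog2
    have h2 : 0 ≤ |d| := abs_nonneg _
    simp only [hC₀def]; linarith
  set q : ℝ := (2 * |k| + C₀) / c with hqdef
  have hq : 0 ≤ q := by
    apply div_nonneg _ hc.le
    have := abs_nonneg k; linarith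
  set R : ℝ := max (max R₀ (max M₁ M₂)) (max 1 (q ^ 2)) with hRdef
  have hRR₀ : R₀ ≤ R := le_trans (le_max_left _ _) (le_max_left _ _)
  have hRM₁ : M₁ ≤ R := le_trans (le_trans (le_max_left _ _) (le_max_right _ _)) (le_max_left _ _)
  have hRM₂ : M₂ ≤ R := le_trans (le_trans (le_max_right _ _) (le_max_right _ _)) (le_max_left _ _)
  have hR1 : 1 ≤ R := le_trans (le_max_left _ _) (le_max_right _ _)
  have hRq : q ^ 2 ≤ R := le_trans (le_max_right _ _) (le_max_right _ _)
  have hR0 : 0 < R := lt_of_lt_of_le one_pos hR1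
  -- analyticity of ψ at points with large first coordinate
  have hAψ : ∀ z : ℝ × ℝ, R < |z.1| → AnalyticAt ℝ ψ z := by
    intro z hz
    exact hψ z (by rw [hU]; left; exact lt_of_le_of_lt hRR₀ hz)
  -- the derivative along vertical lines
  have hder : ∀ a : ℝ, R < |a| → ∀ y : ℝ, HasDerivAt (fun t => ψ (a, t)) (pdy ψ (a, y)) y := by
    intro a ha y
    have h1 : HasFDerivAt ψ (fderiv ℝ ψ (a, y)) (a, y) :=
      (hAψ (a, y) ha).differentiableAt.hasFDerivAt
    have h2 : HasDerivAt (fun t : ℝ => ((a : ℝ), t)) ((0 : ℝ), (1 : ℝ)) y :=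
      (hasDerivAt_const y a).prodMk (hasDerivAt_id y)
    have h3 := h1.comp_hasDerivAt y h2
    exact h3
  -- lower bound on the vertical derivative far away
  have hpdy : ∀ z : ℝ × ℝ, R < ‖z‖ → c / 2 < pdy ψ z := by
    intro z hz
    have h1 := hM₁ z (le_of_lt (lt_of_le_of_lt hRM₁ hz))
    have h2 : dist (pdy ψ z) c < c / 2 := by
      have : dist (pdy ψ z) c ≤ dist (grad ψ z) ((0 : ℝ), c) := by
        rw [Prod.dist_eq]; exact le_max_right _ _
      linarith
    rw [Real.dist_eq, abs_lt] at h2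
    linarith [h2.1]
  have hline : ∀ a : ℝ, R < |a| → ∀ y : ℝ, c / 2 < pdy ψ (a, y) := by
    intro a ha y
    apply hpdy
    calc R < |a| := ha
    _ ≤ ‖((a, y) : ℝ × ℝ)‖ := by
        simpa [Real.norm_eq_abs] using norm_fst_le ((a, y) : ℝ × ℝ)
  -- strict monotonicity along vertical lines
  have hmono : ∀ a : ℝ, R < |a| → StrictMono (fun t => ψ (a, t)) := by
    intro a ha
    apply strictMono_of_deriv_pos
    intro y
    rw [(hder a ha y).deriv]
    linarith [hline a ha y, hc]
  -- linear growth along vertical lines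
  have hgrow : ∀ a : ℝ, R < |a| → ∀ y : ℝ, 0 ≤ y →
      ψ (a, 0) + c / 2 * y ≤ ψ (a, y) ∧ ψ (a, -y) ≤ ψ (a, 0) - c / 2 * y := by
    intro a ha y hy
    have hd2 : ∀ t : ℝ, HasDerivAt (fun s => ψ (a, s) - c / 2 * s) (pdy ψ (a, t) - c / 2) t := by
      intro t
      exact (hder a ha t).sub (by simpa using (hasDerivAt_id t).const_mul (c / 2))
    have hmon : Monotone (fun s => ψ (a, s) - c / 2 * s) := by
      apply monotone_of_deriv_nonneg
      · exact fun t => (hd2 t).differentiableAt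
      · intro t
        rw [(hd2 t).deriv]
        linarith [hline a ha t]
    constructor
    · have := hmon hy
      simp only at this
      linarith
    · have := hmon (neg_nonpos_of_nonneg hy)
      simp only at this
      linarith
  -- existence of a zero on each far vertical line
  have hex : ∀ a : ℝ, R < |a| → ∃ y, ψ (a, y) = 0 := by
    intro a ha
    set g : ℝ → ℝ := fun t => ψ (a, t) with hg
    have hcont : Continuous g := by
      have : Differentiable ℝ g := fun y => (hder a ha y).differentiableAt
      exact this.continuous
    set Y : ℝ := 2 / c * (|g 0| + 1) with hY
    have hYpos : 0 ≤ Y := by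
      apply mul_nonneg (div_nonneg (by norm_num) hc.le)
      have := abs_nonneg (g 0); linarith
    have hkey : c / 2 * Y = |g 0| + 1 := by
      rw [hY]
      field_simp
    have hposY : 0 < g Y := by
      have := (hgrow a ha Y hYpos).1
      have habs := abs_nonneg (g 0)
      have hle := neg_abs_le (g 0)
      simp only [hg] at this ⊢
      nlinarith [hkey]
    have hnegY : g (-Y) < 0 := by
      have := (hgrow a ha Y hYpos).2
      have hle := le_abs_self (g 0)
      simp only [hg] at this ⊢
      nlinarith [hkey]
    have hmem : (0 : ℝ) ∈ Icc (g (-Y)) (g Y) := ⟨hnegY.le, hposY.le⟩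
    have hsub := intermediate_value_Icc (neg_le_self hYpos) hcont.continuousOn
    obtain ⟨y, _, hy⟩ := hsub hmem
    exact ⟨y, hy⟩
  -- the graph function
  set yhat : ℝ → ℝ := fun a => if h : R < |a| then (hex a h).choose else 0 with hyhat
  have hzero : ∀ a : ℝ, R < |a| → ψ (a, yhat a) = 0 := by
    intro a h
    simp only [hyhat, dif_pos h]
    exact (hex a h).choose_spec
  have huniq : ∀ a : ℝ, R < |a| → ∀ y : ℝ, ψ (a, y) = 0 → y = yhat a := by
    intro a ha y hy
    exact (hmono a ha).injective (hy.trans (hzero a ha).symm)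
  -- analyticity of the graph function
  have hany : ∀ a : ℝ, R < |a| → AnalyticAt ℝ yhat a := by
    intro a ha
    set p : ℝ × ℝ := (a, yhat a) with hp
    have hψp : AnalyticAt ℝ ψ p := hAψ p ha
    set F : ℝ × ℝ → ℝ × ℝ := fun z => (z.1, ψ z) with hF
    have hFa : AnalyticAt ℝ F p := analyticAt_fst.prod hψp
    set L : (ℝ × ℝ) →L[ℝ] (ℝ × ℝ) := (ContinuousLinearMap.fst ℝ ℝ ℝ).prod (fderiv ℝ ψ p) with hL
    have hFderiv : HasFDerivAt F L p := hasFDerivAt_fst.prodMk hψp.differentiableAt.hasFDerivAt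
    have hfd : fderiv ℝ F p = L := hFderiv.fderiv
    have hpdyp : c / 2 < pdy ψ p := hline a ha (yhat a)
    have hpdyne : pdy ψ p ≠ 0 := ne_of_gt (by linarith)
    have hact : ∀ u v : ℝ, fderiv ℝ ψ p (u, v) = u * pdx ψ p + v * pdy ψ p := by
      intro u v
      have huv : ((u, v) : ℝ × ℝ) = u • ((1 : ℝ), (0 : ℝ)) + v • ((0 : ℝ), (1 : ℝ)) := by
        simp [Prod.ext_iff]
      rw [huv, (fderiv ℝ ψ p).map_add, (fderiv ℝ ψ p).map_smul, (fderiv ℝ ψ p).map_smul]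
      simp [pdx, pdy, smul_eq_mul]
    have hker : LinearMap.ker (L : (ℝ × ℝ) →ₗ[ℝ] (ℝ × ℝ)) = ⊥ := by
      rw [LinearMap.ker_eq_bot']
      rintro ⟨u, v⟩ hz
      have h1 : (L : (ℝ × ℝ) →ₗ[ℝ] (ℝ × ℝ)) (u, v) = (u, fderiv ℝ ψ p (u, v)) := rfl
      rw [h1] at hz
      have hu : u = 0 := congrArg Prod.fst hz
      have hv0 : fderiv ℝ ψ p (u, v) = 0 := congrArg Prod.snd hz
      rw [hact, hu] at hv0
      have : v * pdy ψ p = 0 := by linarith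
      have hv : v = 0 := by
        rcases mul_eq_zero.mp this with h | h
        · exact h
        · exact absurd h hpdyne
      simp [hu, hv]
    have hrange : LinearMap.range (L : (ℝ × ℝ) →ₗ[ℝ] (ℝ × ℝ)) = ⊤ := by
      rw [LinearMap.range_eq_top]
      rintro ⟨s, t⟩
      refine ⟨(s, (t - s * pdx ψ p) / pdy ψ p), ?_⟩
      have h1 : (L : (ℝ × ℝ) →ₗ[ℝ] (ℝ × ℝ)) (s, (t - s * pdx ψ p) / pdy ψ p)
          = (s, fderiv ℝ ψ p (s, (t - s * pdx ψ p) / pdy ψ p)) := rfl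
      rw [h1, hact]
      have : s * pdx ψ p + (t - s * pdx ψ p) / pdy ψ p * pdy ψ p = t := by
        field_simp
        ring
      rw [this]
    set i := ContinuousLinearEquiv.ofBijective L hker hrange with hi
    have hcoe : (i : (ℝ × ℝ) →L[ℝ] (ℝ × ℝ)) = L := ContinuousLinearEquiv.coe_ofBijective _ _ _
    have hstrict : HasStrictFDerivAt F (i : (ℝ × ℝ) →L[ℝ] (ℝ × ℝ)) p := by
      have h1 := hFa.hasStrictFDerivAt
      rwa [hfd, ← hcoe] at h1
    set Φ := HasStrictFDerivAt.toOpenPartialHomeomorph (f := F) hstrict with hΦ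
    have hΦcoe : ⇑Φ = F := HasStrictFDerivAt.toOpenPartialHomeomorph_coe (f := F) hstrict
    have hpsrc : p ∈ Φ.source := HasStrictFDerivAt.mem_toOpenPartialHomeomorph_source (f := F) hstrict
    have hFp : F p = (a, 0) := by
      simp only [hF, hp]
      exact Prod.ext rfl (hzero a ha)
    have hΦp : Φ p = (a, 0) := by rw [hΦcoe]; exact hFp
    have hsymm : AnalyticAt ℝ Φ.symm ((a : ℝ), (0 : ℝ)) := by
      have h1 : AnalyticAt ℝ Φ p := by rw [hΦcoe]; exact hFa
      have h2 : fderiv ℝ Φ p = (i : (ℝ × ℝ) →L[ℝ] (ℝ × ℝ)) := by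
        rw [hΦcoe, hfd, hcoe]
      have h3 := Φ.analyticAt_symm' hpsrc h1 h2
      rwa [hΦp] at h3
    have htgt : ((a : ℝ), (0 : ℝ)) ∈ Φ.target := hΦp ▸ Φ.map_source hpsrc
    have hev : ∀ᶠ x in 𝓝 a, yhat x = (Φ.symm (x, 0)).2 := by
      have hopen₁ : ∀ᶠ x in 𝓝 a, R < |x| := by
        have hop : IsOpen {x : ℝ | R < |x|} := isOpen_lt continuous_const continuous_abs
        exact hop.mem_nhds ha
      have hopen₂ : ∀ᶠ x in 𝓝 a, ((x : ℝ), (0 : ℝ)) ∈ Φ.target := by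
        have hcn : Continuous fun x : ℝ => ((x : ℝ), (0 : ℝ)) :=
          continuous_id.prodMk continuous_const
        exact hcn.continuousAt.preimage_mem_nhds (Φ.open_target.mem_nhds htgt)
      filter_upwards [hopen₁, hopen₂] with x hx htx
      have h1 : F (Φ.symm (x, 0)) = (x, 0) := by
        rw [← hΦcoe]; exact Φ.right_inv htx
      have h2 : (Φ.symm (x, 0)).1 = x := congrArg Prod.fst h1
      have h3 : ψ (Φ.symm (x, 0)) = 0 := congrArg Prod.snd h1
      have h4 : ψ ((x : ℝ), (Φ.symm (x, 0)).2) = 0 := by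
        have h5 : ((x : ℝ), (Φ.symm (x, 0)).2) = Φ.symm (x, 0) := Prod.ext h2.symm rfl
        rw [h5]; exact h3
      exact (huniq x hx _ h4).symm
    have hcomp : AnalyticAt ℝ (fun x : ℝ => (Φ.symm (x, 0)).2) a := by
      have h1 : AnalyticAt ℝ (fun x : ℝ => ((x, (0 : ℝ)) : ℝ × ℝ)) a :=
        analyticAt_id.prod analyticAt_const
      have h2 : AnalyticAt ℝ (fun x : ℝ => Φ.symm (x, 0)) a :=
        hsymm.comp (f := fun x : ℝ => ((x, (0 : ℝ)) : ℝ × ℝ)) h1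
      exact analyticAt_snd.comp h2
    have hev' : yhat =ᶠ[𝓝 a] (fun x : ℝ => (Φ.symm (x, 0)).2) := hev
    exact hcomp.congr hev'.symm
  -- the asymptotic lower bound
  have hbig : ∀ t : ℝ, R < t → |k| * Real.log t + C₀ ≤ c * t := by
    intro t ht
    have ht1 : 1 ≤ t := le_trans hR1 ht.le
    have ht0 : 0 ≤ t := by linarith
    set s : ℝ := Real.sqrt t with hs
    have hs1 : 1 ≤ s := by
      rw [hs, show (1:ℝ) = Real.sqrt 1 from (Real.sqrt_one).symm]
      exact Real.sqrt_le_sqrt ht1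
    have hqs : q ≤ s := by
      have h1 : Real.sqrt (q ^ 2) ≤ Real.sqrt t := Real.sqrt_le_sqrt (le_trans hRq ht.le)
      rwa [Real.sqrt_sq hq] at h1
    have hss : s * s = t := Real.mul_self_sqrt ht0
    have hlog : Real.log t ≤ 2 * s := by
      have h1 : Real.log s ≤ s - 1 := Real.log_le_sub_one_of_pos (by linarith)
      have h2 : Real.log s = Real.log t / 2 := Real.log_sqrt ht0
      linarith
    have hcq : 2 * |k| + C₀ ≤ c * s := by
      have := mul_le_mul_of_nonneg_left hqs hc.le
      rwa [hqdef, mul_div_cancel₀ _ (ne_of_gt hc)] at this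
    have habs : 0 ≤ |k| := abs_nonneg k
    nlinarith [mul_le_mul_of_nonneg_right hcq (by linarith : (0:ℝ) ≤ s)]
  -- no zeros in the horizontal strips
  have hstrip : ∀ x y : ℝ, |x| ≤ R → R < |y| → ψ (x, y) ≠ 0 := by
    intro x y hxle hy hzero'
    set r : ℝ := Real.sqrt (x ^ 2 + y ^ 2) with hr
    have hy1 : 1 < |y| := lt_of_le_of_lt hR1 hy
    have hr_lb : |y| ≤ r := by
      rw [hr, show |y| = Real.sqrt (y ^ 2) from (Real.sqrt_sq_eq_abs y).symm]
      exact Real.sqrt_le_sqrt (by nlinarith [sq_nonneg x])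
    have hxy : x ^ 2 ≤ y ^ 2 := by
      have h1 : |x| ≤ |y| := le_trans hxle hy.le
      calc x ^ 2 = |x| ^ 2 := (sq_abs x).symm
      _ ≤ |y| ^ 2 := by nlinarith [abs_nonneg x]
      _ = y ^ 2 := sq_abs y
    have hr_ub : r ≤ Real.sqrt 2 * |y| := by
      rw [hr]
      calc Real.sqrt (x ^ 2 + y ^ 2) ≤ Real.sqrt (2 * y ^ 2) := Real.sqrt_le_sqrt (by linarith)
      _ = Real.sqrt 2 * Real.sqrt (y ^ 2) := Real.sqrt_mul (by norm_num) _
      _ = Real.sqrt 2 * |y| := by rw [Real.sqrt_sq_eq_abs]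
    have hnorm : M₂ ≤ ‖((x, y) : ℝ × ℝ)‖ := by
      have := norm_snd_le ((x, y) : ℝ × ℝ)
      simp only [Real.norm_eq_abs] at this
      linarith [hRM₂, hy]
    have h0 := hM₂ (x, y) hnorm
    rw [Real.dist_eq, sub_zero] at h0
    simp only [hzero'] at h0
    have h0' : |(0 : ℝ) - (c * y - k * Real.log r) - d| < 1 := h0
    have he : |(-(c * y) + k * Real.log r - d)| < 1 := by
      rw [show -(c * y) + k * Real.log r - d = 0 - (c * y - k * Real.log r) - d by ring]
      exact h0'
    have hlogr_nonneg : 0 ≤ Real.log r := Real.log_nonneg (by linarith)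
    have hlogr_ub : Real.log r ≤ Real.log (Real.sqrt 2) + Real.log |y| := by
      calc Real.log r ≤ Real.log (Real.sqrt 2 * |y|) :=
        Real.log_le_log (by linarith) hr_ub
      _ = Real.log (Real.sqrt 2) + Real.log |y| :=
        Real.log_mul (by positivity) (by positivity)
    have hcy : c * |y| < |k| * Real.log r + |d| + 1 := by
      rw [abs_lt] at he
      have hk1 : k * Real.log r ≤ |k| * Real.log r :=
        mul_le_mul_of_nonneg_right (le_abs_self k) hlogr_nonneg
      have hk2 : -(|k| * Real.log r) ≤ k * Real.log r := by
        have := mul_le_mul_of_nonneg_right (neg_abs_le k) hlogr_nonneg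
        linarith [this]
      have hd1 := le_abs_self d
      have hd2 := neg_abs_le d
      rcases abs_cases y with ⟨hy', _⟩ | ⟨hy', _⟩
      · have hcyy : c * |y| = c * y := by rw [hy']
        rw [hcyy]; linarith [he.1]
      · have hcyy : c * |y| = -(c * y) := by rw [hy']; ring
        rw [hcyy]; linarith [he.2]
    have hfinal : c * |y| < |k| * Real.log |y| + C₀ := by
      calc c * |y| < |k| * Real.log r + |d| + 1 := hcy
      _ ≤ |k| * (Real.log (Real.sqrt 2) + Real.log |y|) + |d| + 1 := by
            gcongr
      _ = |k| * Real.log |y| + C₀ := by rw [hC₀def]; ring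
    have := hbig |y| hy
    have hlogy : 0 ≤ Real.log |y| := Real.log_nonneg hy1.le
    linarith
  -- assemble
  refine ⟨R, hRR₀, yhat, yhat, ?_, ?_, ?_⟩
  · intro x hx
    have hx' : R < |x| := by
      rw [mem_Iio] at hx
      rw [abs_of_neg (by linarith : x < 0)]
      linarith
    exact hany x hx'
  · intro x hx
    have hx' : R < |x| := by
      rw [mem_Ioi] at hx
      rw [abs_of_pos (by linarith : 0 < x)]
      linarith
    exact hany x hx'
  · ext z
    obtain ⟨x, y⟩ := z
    simp only [mem_setOf_eq, mem_union, mem_image, mem_Iio, mem_Ioi]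
    constructor
    · rintro ⟨hcase, hz⟩
      have hx : R < |x| := by
        rcases hcase with h | h
        · exact h
        · by_contra hxle
          push_neg at hxle
          exact hstrip x y hxle h hz
      have hy : y = yhat x := huniq x hx y hz
      rcases lt_abs.mp hx with h | h
      · right; exact ⟨x, h, by rw [hy]⟩
      · left; exact ⟨x, by linarith, by rw [hy]⟩
    · rintro (⟨t, ht, hteq⟩ | ⟨t, ht, hteq⟩)
      · obtain ⟨h1, h2⟩ := Prod.mk.injEq .. ▸ hteq
        subst h1; subst h2
        have ht' : R < |t| := by rw [abs_of_neg (by linarith : t < 0)]; linarith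
        exact ⟨Or.inl ht', hzero t ht'⟩
      · obtain ⟨h1, h2⟩ := Prod.mk.injEq .. ▸ hteq
        subst h1; subst h2
        have ht' : R < |t| := by rw [abs_of_pos (by linarith : 0 < t)]; linarith
        exact ⟨Or.inl ht', hzero t ht'⟩
end
end
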